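/- arXiv:1804.09939 — 3 statements merged into one kernel-verified Lean document; each statement's English description precedes it below -/
import Mathlib

section
/- Let n ≥ 2 be an integer, let ε ∈ {1, -1}, and let r be an arbitrary integer. Then the Laurent polynomial 1 - t + t² - ε·t^r does not belong to the ideal I(1 - tⁿ) of ℤ[t,t⁻¹]. (In the paper this is the key algebraic claim in the proof that the trefoil knot is not V^n-equivalent to the unknot for n ≥ 2: the first Alexander polynomial 1 - t + t² of the trefoil is not congruent to ε t^r · 1 modulo I(1 - tⁿ).) -/
/-!
Reducing exponents modulo `n` is a ring map `ℤ[t,t⁻¹] → ℤ[ℤ/nℤ]` that kills `1 - tⁿ`, so it suffices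
that the image `δ₀ - δ₁ + δ₂ - ε δᵣ` of the polynomial is nonzero. For `n ≥ 2` the residues `0` and
`2` differ from `1`, so if `r ≢ 1` the coefficient at `1` is `-1`, and if `r ≡ 1` the coefficient
at `0` is `1` or `2`.
-/

open LaurentPolynomial AddMonoidAlgebra

namespace LaurentPolynomial

variable (R : Type*) (n : ℕ)

noncomputable def reduceExponentsMod [CommSemiring R] : R[T;T⁻¹] →+* AddMonoidAlgebra R (ZMod n) :=
  mapDomainRingHom R (Int.castAddHom (ZMod n))

variable {R n}

@[simp]
lemma reduceExponentsMod_T [CommSemiring R] (a : ℤ) :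
    reduceExponentsMod R n (T a) = single (a : ZMod n) 1 := by
  rw [reduceExponentsMod, mapDomainRingHom_apply, T, mapDomain_single]
  rfl

lemma span_one_sub_T_le_ker_reduceExponentsMod [CommRing R] :
    Ideal.span {1 - T (n : ℤ)} ≤ RingHom.ker (reduceExponentsMod R n) := by
  rw [Ideal.span_le, Set.singleton_subset_iff, SetLike.mem_coe, RingHom.mem_ker, map_sub, map_one,
    reduceExponentsMod_T]
  simp [one_def]

lemma reduceExponentsMod_one_sub_T_add_T_sub_intCast_mul_T (ε r : ℤ) :
    reduceExponentsMod ℤ n (1 - T 1 + T 2 - (ε : ℤ[T;T⁻¹]) * T r) =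
      single 0 1 - single 1 1 + single 2 1 - single (r : ZMod n) ε := by
  rw [map_sub, map_add, map_sub, map_mul, map_one, map_intCast, reduceExponentsMod_T,
    reduceExponentsMod_T, reduceExponentsMod_T, one_def, intCast_def, single_mul_single, zero_add,
    mul_one, Int.cast_one, Int.cast_ofNat, Int.cast_id]

lemma reduceExponentsMod_one_sub_T_add_T_sub_intCast_mul_T_ne_zero [Fact (1 < n)] (ε r : ℤ) :
    reduceExponentsMod ℤ n (1 - T 1 + T 2 - (ε : ℤ[T;T⁻¹]) * T r) ≠ 0 := by
  have h01 : (0 : ZMod n) ≠ 1 := zero_ne_one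
  have h21 : (2 : ZMod n) ≠ 1 := fun h ↦
    one_ne_zero (by linear_combination h : (1 : ZMod n) = 0)
  rw [reduceExponentsMod_one_sub_T_add_T_sub_intCast_mul_T]
  intro h
  by_cases hr : (r : ZMod n) = 1
  · have h0 : (1 : ℤ) + (if (2 : ZMod n) = 0 then 1 else 0) = 0 := by
      simpa [Finsupp.single_apply, h01, hr] using congr(($h).coeff 0)
    split_ifs at h0 <;> omega
  · have h1 := congr(($h).coeff 1)
    simp [h21, hr] at h1

end LaurentPolynomial

theorem trefoil_alexander_not_in_ideal_general (n : ℕ) (hn : 2 ≤ n) (ε : ℤ)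
    (r : ℤ) :
    (1 - LaurentPolynomial.T 1 + LaurentPolynomial.T 2 - (ε : LaurentPolynomial ℤ) *
        LaurentPolynomial.T r) ∉
      Ideal.span ({1 - LaurentPolynomial.T (n : ℤ)} : Set (LaurentPolynomial ℤ)) := by
  have : Fact (1 < n) := ⟨hn⟩
  exact fun hmem ↦ reduceExponentsMod_one_sub_T_add_T_sub_intCast_mul_T_ne_zero ε r
    (span_one_sub_T_le_ker_reduceExponentsMod hmem)

/-- For `n ≥ 2`, `ε ∈ {1, -1}` and `r : ℤ`, the Laurent polynomial
`1 - t + t² - ε·tʳ` is not in the ideal of `ℤ[t,t⁻¹]` generated by `1 - tⁿ`. -/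
theorem trefoil_alexander_not_in_ideal (n : ℕ) (hn : 2 ≤ n) (ε : ℤ) (hε : ε = 1 ∨ ε = -1)
    (r : ℤ) :
    (1 - LaurentPolynomial.T 1 + LaurentPolynomial.T 2 - (ε : LaurentPolynomial ℤ) *
        LaurentPolynomial.T r) ∉
      Ideal.span ({1 - LaurentPolynomial.T (n : ℤ)} : Set (LaurentPolynomial ℤ)) :=
  trefoil_alexander_not_in_ideal_general n hn ε r
end

section
/- Let n ≥ 2 be an integer, let ε ∈ {1, -1}, and let r be an arbitrary integer. Let f_n : ℤ[t,t⁻¹] → ℤ be the map sending a Laurent polynomial ∑ᵢ aᵢ tⁱ to the (finite) sum of those coefficients aᵢ whose exponent i satisfies i ≡ 0 (mod n) or i ≡ 2 (mod n). Then f_n(1 - t + t² - ε·t^r) ≠ 0. -/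
open LaurentPolynomial

/-- `f_n` sends a Laurent polynomial `∑ᵢ aᵢ tⁱ` to the sum of those coefficients `aᵢ`
whose exponent `i` satisfies `i ≡ 0 (mod n)` or `i ≡ 2 (mod n)`. -/
noncomputable def fn (n : ℕ) (p : LaurentPolynomial ℤ) : ℤ :=
  Finsupp.sum (AddMonoidAlgebra.coeff p : ℤ →₀ ℤ)
    (fun i a => if i ≡ 0 [ZMOD (n : ℤ)] ∨ i ≡ 2 [ZMOD (n : ℤ)] then a else 0)

section

variable (n : ℕ)

lemma fn_add (p q : LaurentPolynomial ℤ) : fn n (p + q) = fn n p + fn n q := by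
  unfold fn
  rw [AddMonoidAlgebra.coeff_add]
  exact Finsupp.sum_add_index' (fun _ => by simp) (fun _ _ _ => by split <;> simp)

lemma fn_C_mul_T (a i : ℤ) :
    fn n (C a * T i) = if i ≡ 0 [ZMOD (n : ℤ)] ∨ i ≡ 2 [ZMOD (n : ℤ)] then a else 0 := by
  rw [← single_eq_C_mul_T]
  exact Finsupp.sum_single_index (by simp)

lemma fn_T (i : ℤ) :
    fn n (T i) = if i ≡ 0 [ZMOD (n : ℤ)] ∨ i ≡ 2 [ZMOD (n : ℤ)] then 1 else 0 := by
  simpa using fn_C_mul_T n 1 i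

noncomputable def fnAddHom : LaurentPolynomial ℤ →+ ℤ :=
  AddMonoidHom.mk' (fn n) (fn_add n)

lemma fnAddHom_apply (p : LaurentPolynomial ℤ) : fnAddHom n p = fn n p := rfl

end

lemma Int.one_not_modEq_zero_or_two {n : ℤ} (hn : 2 ≤ n) :
    ¬(1 ≡ 0 [ZMOD n] ∨ 1 ≡ 2 [ZMOD n]) := by
  rintro (h | h) <;> have h := Int.le_of_dvd one_pos (by simpa using h.dvd) <;> omega

/-- For `n ≥ 2`, `ε ∈ {1, -1}` and `r : ℤ`,
`f_n(1 - t + t² - ε·tʳ) ≠ 0`. -/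
theorem fn_trefoil_ne_zero (n : ℕ) (hn : 2 ≤ n) (ε : ℤ) (hε : ε = 1 ∨ ε = -1) (r : ℤ) :
    fn n (1 - LaurentPolynomial.T 1 + LaurentPolynomial.T 2 -
      (ε : LaurentPolynomial ℤ) * LaurentPolynomial.T r) ≠ 0 := by
  have hone := Int.one_not_modEq_zero_or_two (n := n) (by exact_mod_cast hn)
  rw [← eq_intCast C ε, ← T_zero, ← fnAddHom_apply, map_sub, map_add, map_sub]
  simp only [fnAddHom_apply, fn_T, fn_C_mul_T, if_neg hone, Int.ModEq.refl, true_or, or_true,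
    if_true]
  -- the value is `1 - 0 + 1 - ε·[r ≡ 0 or 2]`, which lies in `{1, 2, 3}`
  rcases hε with rfl | rfl <;> split <;> norm_num
end

section
/- Let n ≥ 2 be an integer. In the quotient ring ℤ[t,t⁻¹]/I(1 - tⁿ), the image of the Laurent polynomial 1 - t + t² is not equal to the image of ε·t^r for any ε ∈ {1, -1} and any integer r. (This expresses, at the level of Alexander polynomials modulo I(1 - tⁿ), that the trefoil knot is not V^n-equivalent to the unknot for any n ≥ 2.) -/
/-!
Since `tⁿ = 1` in the quotient, reducing exponents modulo `n` gives a ring map from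
`ℤ[t,t⁻¹]/(1 - tⁿ)` to the group ring `ℤ[ℤ/n]`. There `1 - t + t²` is not a monomial: for `n ≥ 2`
its coefficient at `t` is `-1` and its constant coefficient is positive, because `1 ≠ 0` and
`2 ≠ 1` in `ℤ/n`.
-/

open LaurentPolynomial AddMonoidAlgebra

namespace LaurentPolynomial

variable {R : Type*}

noncomputable def reduceExponents [Semiring R] (n : ℕ) :
    R[T;T⁻¹] →+* AddMonoidAlgebra R (ZMod n) :=
  mapDomainRingHom R (Int.castAddHom (ZMod n))

lemma reduceExponents_T [Semiring R] (n : ℕ) (m : ℤ) :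
    reduceExponents n (T m : R[T;T⁻¹]) = single (m : ZMod n) 1 :=
  mapDomain_single

lemma reduceExponents_one_sub_T_self [Ring R] (n : ℕ) :
    reduceExponents n (1 - T n : R[T;T⁻¹]) = 0 := by
  rw [map_sub, map_one, reduceExponents_T, Int.cast_natCast, ZMod.natCast_self, one_def, sub_self]

lemma reduceExponents_eq_of_mk_eq [CommRing R] {n : ℕ} {p q : R[T;T⁻¹]}
    (h : Ideal.Quotient.mk (Ideal.span {1 - T n}) p = Ideal.Quotient.mk _ q) :
    reduceExponents n p = reduceExponents n q := by
  have hker : Ideal.span {1 - T n} ≤ RingHom.ker (reduceExponents (R := R) n) := by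
    rw [Ideal.span_le, Set.singleton_subset_iff]
    exact reduceExponents_one_sub_T_self n
  exact (RingHom.sub_mem_ker_iff _).mp (hker (Ideal.Quotient.eq.mp h))

end LaurentPolynomial

lemma AddMonoidAlgebra.single_zero_sub_single_one_add_single_two_ne_single {G : Type*}
    [AddGroupWithOne G] (h10 : (1 : G) ≠ 0) (a : G) (c : ℤ) :
    (single 0 1 - single 1 1 + single 2 1 : AddMonoidAlgebra ℤ G) ≠ single a c := by
  classical
  intro h
  have h21 : (2 : G) ≠ 1 := fun h2 => h10 (by rwa [← one_add_one_eq_two, add_eq_right] at h2)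
  have coeff0 := congrArg (fun x => x.coeff 0) h
  have coeff1 := congrArg (fun x => x.coeff 1) h
  simp only [coeff_add, coeff_sub, coeff_single, Finsupp.coe_add, Finsupp.coe_sub, Pi.add_apply,
    Pi.sub_apply, Finsupp.single_apply, h10, h10.symm, h21, if_true, if_false] at coeff0 coeff1
  -- the coefficient at `1` forces `a = 1`, and then the coefficient at `0` would vanish
  split_ifs at coeff0 coeff1 <;> omega

/-- For `n ≥ 2`, in the quotient ring `ℤ[t,t⁻¹]/I(1 - tⁿ)`, the image of
`1 - t + t²` differs from the image of `ε·tʳ` for every `ε ∈ {1, -1}` and every `r : ℤ`. -/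
theorem trefoil_ne_unit_in_quotient (n : ℕ) (hn : 2 ≤ n) :
    ∀ (ε : ℤ), (ε = 1 ∨ ε = -1) → ∀ (r : ℤ),
      Ideal.Quotient.mk
          (Ideal.span ({1 - LaurentPolynomial.T (n : ℤ)} : Set (LaurentPolynomial ℤ)))
          (1 - LaurentPolynomial.T 1 + LaurentPolynomial.T 2) ≠
        Ideal.Quotient.mk
          (Ideal.span ({1 - LaurentPolynomial.T (n : ℤ)} : Set (LaurentPolynomial ℤ)))
          ((ε : LaurentPolynomial ℤ) * LaurentPolynomial.T r) := by
  intro ε _ r h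
  have : Fact (1 < n) := ⟨hn⟩
  have h := reduceExponents_eq_of_mk_eq h
  rw [map_add, map_sub, map_one, map_mul, map_intCast, reduceExponents_T, reduceExponents_T,
    reduceExponents_T, intCast_def, single_mul_single, zero_add, mul_one, Int.cast_one,
    Int.cast_ofNat, one_def] at h
  exact single_zero_sub_single_one_add_single_two_ne_single one_ne_zero _ _ h
end
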